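/- arXiv:math/0406116 — 5 statements merged into one kernel-verified Lean document; each statement's English description precedes it below -/
import Mathlib

section
/- Let M be a matroid on a finite ground set E and ω : E → ℝ. A subset B ⊆ E is maximal among the subsets of E that contain no set of the form init_ω(C) for a circuit C of M, if and only if B is a basis of M whose ω-weight is minimal among the ω-weights of all bases of M. -/
/-!
Call `S` *initial-free* if it contains `initW ω C` for no circuit `C`. Initial-free sets are
independent. An initial-free independent set `I` that is not a basis stays initial-free after
adding a lightest element `x` outside its closure: a circuit `C` with `initW ω C ⊆ insert x I`
must have `x` among its heaviest elements, so every lighter element of `C` lies in the closure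
of `I` by the choice of `x`, and then `x ∈ cl (C \ {x}) ⊆ cl I`. Hence the maximal initial-free
sets are bases. For bases, initial-freeness is equivalent to minimal weight: an initial-free
basis wins every exchange against another basis `B'` (swap an element `b` of `B \ B'` for a
heaviest element of the fundamental circuit of `b` in `B'`), and in a minimal-weight basis each
element `f` is spanned by the elements of the basis not heavier than `f`, which rules out
a circuit whose heaviest elements all lie in the basis.
-/

/-- `initW ω C` is the set of `ω`-maximal elements of `C`. -/
def initW {α : Type*} (ω : α → ℝ) (C : Set α) : Set α :=
  {e ∈ C | ∀ f ∈ C, ω f ≤ ω e}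

/-- A circuit of a matroid is a minimal dependent set. -/
def IsCircuit {α : Type*} (M : Matroid α) (C : Set α) : Prop :=
  Minimal M.Dep C

open Set

theorem finsum_mem_insert_sdiff_singleton_add {α M : Type*} [AddCommMonoid M] (g : α → M)
    {S : Set α} {b f : α} (hS : S.Finite) (hb : b ∈ S) (hf : f ∉ S) :
    ∑ᶠ x ∈ insert f S \ {b}, g x + g b = ∑ᶠ x ∈ S, g x + g f := by
  have hfb : f ≠ b := ne_of_mem_of_not_mem hb hf |>.symm
  have hSb : ∑ᶠ x ∈ S, g x = g b + ∑ᶠ x ∈ S \ {b}, g x := by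
    rw [← finsum_mem_insert g (show b ∉ S \ {b} from fun h => h.2 rfl) hS.sdiff,
      insert_sdiff_singleton, insert_eq_of_mem hb]
  rw [← insert_sdiff_singleton_comm hfb, finsum_mem_insert g (fun h => hf h.1) hS.sdiff, hSb]
  abel

section InitW

variable {α : Type*} {ω : α → ℝ} {C : Set α} {c e : α}

theorem initW_subset : initW ω C ⊆ C := sep_subset _ _

theorem mem_initW_of_le (he : e ∈ initW ω C) (hc : c ∈ C) (hec : ω e ≤ ω c) :
    c ∈ initW ω C :=
  ⟨hc, fun f hf => (he.2 f hf).trans hec⟩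

theorem initW_nonempty (hC : C.Finite) (hne : C.Nonempty) : (initW ω C).Nonempty :=
  let ⟨e, heC, hmax⟩ := exists_max_image C ω hC hne
  ⟨e, heC, hmax⟩

end InitW

namespace Matroid

variable {α : Type*} {M : Matroid α} {ω : α → ℝ} {B I S : Set α} {f : α}

def InitWFree (M : Matroid α) (ω : α → ℝ) (S : Set α) : Prop :=
  ∀ C, M.IsCircuit C → ¬ initW ω C ⊆ S

def IsMinWeightBase (M : Matroid α) (ω : α → ℝ) (B : Set α) : Prop :=
  M.IsBase B ∧ ∀ B', M.IsBase B' → ∑ᶠ e ∈ B, ω e ≤ ∑ᶠ e ∈ B', ω e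

theorem InitWFree.indep (hS : M.InitWFree ω S) (hSE : S ⊆ M.E) : M.Indep S := by
  by_contra hdep
  obtain ⟨C, hCS, hC⟩ := (M.dep_of_not_indep hdep hSE).exists_isCircuit_subset
  exact hS C hC (initW_subset.trans hCS)

theorem InitWFree.insert_of_forall_le (hI : M.InitWFree ω I) (hIi : M.Indep I) {x : α}
    (hx : x ∈ M.E \ M.closure I) (hxmin : ∀ y ∈ M.E \ M.closure I, ω x ≤ ω y) : M.InitWFree ω (insert x I) := by
  intro C hC hCx
  have hxC : x ∈ initW ω C := by
    by_contra hxC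
    exact hI C hC fun c hc => (hCx hc).resolve_left fun h => hxC (h ▸ hc)
  have hCcl : C \ {x} ⊆ M.closure I := by
    rintro c ⟨hcC, hcx⟩
    by_cases hlt : ω c < ω x
    · by_contra hc
      exact (hxmin c ⟨hC.subset_ground hcC, hc⟩).not_gt hlt
    · exact M.mem_closure_of_mem
        (((hCx (mem_initW_of_le hxC hcC (not_lt.1 hlt))).resolve_left hcx))
  exact hx.2 (M.closure_subset_closure_of_subset_closure hCcl
    (hC.mem_closure_sdiff_singleton_of_mem hxC.1))

theorem isBase_of_maximal_initWFree (hfin : M.E.Finite)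
    (hB : Maximal (fun S => S ⊆ M.E ∧ M.InitWFree ω S) B) : M.IsBase B := by
  obtain ⟨⟨hBE, hBfree⟩, hBmax⟩ := hB
  have hBi := hBfree.indep hBE
  by_contra hnb
  have hne : (M.E \ M.closure B).Nonempty :=
    sdiff_nonempty.2 fun h => hnb (hBi.isBase_of_ground_subset_closure h)
  obtain ⟨x, hx, hxmin⟩ := exists_min_image _ ω (hfin.subset sdiff_subset) hne
  have hxB := hBmax ⟨insert_subset hx.1 hBE, hBfree.insert_of_forall_le hBi hx hxmin⟩
    (subset_insert x B)
  exact hx.2 (M.mem_closure_of_mem (hxB (mem_insert x B)))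

theorem IsBase.isMinWeightBase_of_initWFree (hfin : M.E.Finite) (hB : M.IsBase B)
    (hfree : M.InitWFree ω B) : M.IsMinWeightBase ω B := by
  refine ⟨hB, fun B' hB' => ?_⟩
  induction hn : (B' \ B).ncard using Nat.strong_induction_on generalizing B' with
  | _ n ih =>
  obtain rfl | hne := eq_or_ne B B'
  · exact le_rfl
  obtain ⟨b, hbB, hbB'⟩ : (B \ B').Nonempty :=
    sdiff_nonempty.2 fun h => hne (hB.eq_of_subset_isBase hB' h)
  have hD := hB'.fundCircuit_isCircuit (hB.subset_ground hbB) hbB'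
  obtain ⟨e, heD, heB⟩ := not_subset.1 (hfree _ hD)
  have heb : e ≠ b := ne_of_mem_of_not_mem hbB heB |>.symm
  have heB' : e ∈ B' := (M.fundCircuit_subset_insert b B' (initW_subset heD)).resolve_left heb
  have hB'' : M.IsBase (insert b B' \ {e}) := hB'.exchange_isBase_of_indep' heB' hbB'
    ((hB'.indep.mem_fundCircuit_iff (by rw [hB'.closure_eq]; exact hB.subset_ground hbB)
      hbB').1 (initW_subset heD))
  have hw := finsum_mem_insert_sdiff_singleton_add ω (hfin.subset hB'.subset_ground) heB' hbB'
  have hbe : ω b ≤ ω e := heD.2 b (M.mem_fundCircuit b B')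
  have hlt : ((insert b B' \ {e}) \ B).ncard < n := by
    refine hn ▸ ncard_lt_ncard ?_ ((hfin.subset hB'.subset_ground).sdiff)
    refine ⟨?_, fun h => (h ⟨heB', heB⟩).1.2 rfl⟩
    rintro x ⟨⟨rfl | hxB', -⟩, hxB⟩
    · exact absurd hbB hxB
    · exact ⟨hxB', hxB⟩
  have hle := ih _ hlt _ hB'' rfl
  linarith

theorem IsMinWeightBase.mem_closure_weight_le (hfin : M.E.Finite) (hB : M.IsMinWeightBase ω B)
    (hf : f ∈ M.E) : f ∈ M.closure {b ∈ B | ω b ≤ ω f} := by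
  by_cases hfB : f ∈ B
  · exact M.mem_closure_of_mem' ⟨hfB, le_rfl⟩
  have hcl : f ∈ M.closure B := by rwa [hB.1.closure_eq]
  have hC := hB.1.indep.fundCircuit_isCircuit hcl hfB
  have hCf : M.fundCircuit f B \ {f} ⊆ {b ∈ B | ω b ≤ ω f} := by
    rintro b ⟨hbC, hbf⟩
    have hbB : b ∈ B := (M.fundCircuit_subset_insert f B hbC).resolve_left hbf
    refine ⟨hbB, not_lt.1 fun hlt => ?_⟩
    have hB' := hB.1.exchange_isBase_of_indep' hbB hfB
      ((hB.1.indep.mem_fundCircuit_iff hcl hfB).1 hbC)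
    have hw := finsum_mem_insert_sdiff_singleton_add ω (hfin.subset hB.1.subset_ground) hbB hfB
    have hle := hB.2 _ hB'
    linarith
  exact M.closure_subset_closure hCf
    (hC.mem_closure_sdiff_singleton_of_mem (M.mem_fundCircuit f B))

theorem IsBase.initWFree_of_forall_mem_closure (hfin : M.E.Finite) (hB : M.IsBase B)
    (h : ∀ f ∈ M.E, f ∈ M.closure {b ∈ B | ω b ≤ ω f}) : M.InitWFree ω B := by
  intro C hC hCB
  obtain ⟨e, he⟩ := initW_nonempty (ω := ω) (hfin.subset hC.subset_ground) hC.nonempty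
  have hCe : C \ {e} ⊆ M.closure (B \ {e}) := by
    rintro c ⟨hcC, hce⟩
    by_cases hlt : ω c < ω e
    · have hlighter : {b ∈ B | ω b ≤ ω c} ⊆ B \ {e} := fun b hb =>
        ⟨hb.1, fun hbe => (hb.2.trans_lt (hbe ▸ hlt)).false⟩
      exact M.closure_subset_closure hlighter (h c (hC.subset_ground hcC))
    · exact M.mem_closure_of_mem' (X := B \ {e})
        ⟨hCB (mem_initW_of_le he hcC (not_lt.1 hlt)), hce⟩ (hC.subset_ground hcC)
  exact hB.indep.notMem_closure_sdiff_of_mem (hCB he)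
    (M.closure_subset_closure_of_subset_closure hCe (hC.mem_closure_sdiff_singleton_of_mem he.1))

theorem IsMinWeightBase.initWFree (hfin : M.E.Finite) (hB : M.IsMinWeightBase ω B) :
    M.InitWFree ω B :=
  hB.1.initWFree_of_forall_mem_closure hfin fun _ hf => hB.mem_closure_weight_le hfin hf

end Matroid

/-- A subset `B` of the ground set of a matroid `M` (finite ground set) is maximal among
the subsets of the ground set containing no set of the form `initW ω C` for a circuit `C`
of `M`, if and only if `B` is a basis of `M` of minimal `ω`-weight. -/
theorem stmt1 {α : Type*} (M : Matroid α) (hfin : M.E.Finite) (ω : α → ℝ) (B : Set α) :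
    Maximal (fun S : Set α => S ⊆ M.E ∧ ∀ C : Set α, IsCircuit M C → ¬ initW ω C ⊆ S) B ↔
      (M.IsBase B ∧ ∀ B' : Set α, M.IsBase B' → ∑ᶠ e ∈ B, ω e ≤ ∑ᶠ e ∈ B', ω e) := by
  -- The frozen `IsCircuit` unfolds to Mathlib's `Matroid.IsCircuit`: both are `Minimal M.Dep`.
  change Maximal (fun S => S ⊆ M.E ∧ M.InitWFree ω S) B ↔ M.IsMinWeightBase ω B
  refine ⟨fun hmax => (M.isBase_of_maximal_initWFree hfin hmax).isMinWeightBase_of_initWFree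
    hfin hmax.prop.2, fun hB => ⟨⟨hB.1.subset_ground, hB.initWFree hfin⟩, fun S hS hBS => ?_⟩⟩
  exact (hB.1.eq_of_subset_indep (hS.2.indep hS.1) hBS).symm.le
end

section
/- Let V be a real vector space, let v_1, …, v_n ∈ V, and let ω ∈ ℝ^n. Then the following are equivalent: (i) for every nonzero a ∈ ℝ^n with a_1 v_1 + ⋯ + a_n v_n = 0 whose support is minimal (with respect to inclusion) among the supports of nonzero linear dependences of v_1, …, v_n, the set of indices i in the support of a at which ω_i is maximal contains both an index i with a_i > 0 and an index j with a_j < 0; (ii) for every t ∈ ℝ there exists a linear functional λ : V → ℝ such that λ(v_i) = 0 for all i with ω_i ≤ t and λ(v_i) > 0 for all i with ω_i > t. -/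
/-!
For (ii) ⇒ (i), take a nonzero dependence `a`, let `m` be the maximum of `ω` on its support and
apply (ii) with `t` just below `m`: in `0 = ∑ aᵢ λ(vᵢ)` only the indices of the support with
`ωᵢ = m` survive, each with `λ(vᵢ) > 0`, so `a` takes both signs there.

For (i) ⇒ (ii), a Gordan-type alternative (Hahn–Banach in the coefficient space) shows that if
(ii) fails at `t`, some dependence is nonnegative and not identically zero on `{ω > t}`. A
dependence of this kind with minimal support is a circuit, by conformal elimination. Its
`ω`-maximum lies in `{ω > t}`, where it has no negative entry, contradicting (i).
-/

open Finset

theorem LinearMap.apply_eq_zero_of_forall_lt_apply {E : Type*} [AddCommGroup E] [Module ℝ E]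
    (f : E →ₗ[ℝ] ℝ) {M : Submodule ℝ E} {r : ℝ} (h : ∀ x ∈ M, r < f x) {x : E} (hx : x ∈ M) :
    f x = 0 := by
  by_contra hne
  have := h (((r - 1) / f x) • x) (M.smul_mem _ hx)
  rw [map_smul, smul_eq_mul, div_mul_cancel₀ _ hne] at this
  linarith

theorem LinearMap.exists_comp_eq_of_ker_le {K V₁ V₂ : Type*} [Field K] [AddCommGroup V₁]
    [Module K V₁] [AddCommGroup V₂] [Module K V₂] (L : V₁ →ₗ[K] V₂) (g : V₁ →ₗ[K] K)
    (h : LinearMap.ker L ≤ LinearMap.ker g) : ∃ φ : V₂ →ₗ[K] K, φ ∘ₗ L = g := by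
  have : g ∈ LinearMap.range L.dualMap := by
    rw [LinearMap.range_dualMap_eq_dualAnnihilator_ker, Submodule.mem_dualAnnihilator]
    exact fun x hx => h hx
  exact this

theorem exists_lt_forall_le_of_lt {ι α : Type*} [Fintype ι] [LinearOrder α] [NoMinOrder α]
    (f : ι → α) (m : α) : ∃ t < m, ∀ i, f i < m → f i ≤ t := by
  classical
  rcases (univ.filter fun i => f i < m).eq_empty_or_nonempty with hs | hs
  · obtain ⟨t, ht⟩ := exists_lt m
    exact ⟨t, ht, fun i hi => absurd (mem_filter.2 ⟨mem_univ i, hi⟩) (hs ▸ notMem_empty i)⟩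
  · obtain ⟨j, hj, hmax⟩ := exists_max_image _ f hs
    exact ⟨f j, (mem_filter.1 hj).2, fun i hi => hmax i (mem_filter.2 ⟨mem_univ i, hi⟩)⟩

theorem exists_pos_of_sum_mul_eq_zero {ι : Type*} [Fintype ι] {a c : ι → ℝ}
    (h : ∑ i, a i * c i = 0) (hc : ∀ i, 0 ≤ c i) (hne : ∃ i, a i ≠ 0 ∧ 0 < c i) :
    ∃ i, 0 < a i ∧ 0 < c i := by
  by_contra! hno
  have hle : ∀ i ∈ univ, a i * c i ≤ 0 := fun i _ => by
    by_cases ha : 0 < a i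
    · rw [le_antisymm (hno i ha) (hc i), mul_zero]
    · exact mul_nonpos_of_nonpos_of_nonneg (not_lt.1 ha) (hc i)
  obtain ⟨i, hai, hci⟩ := hne
  have := (sum_eq_zero_iff_of_nonpos hle).1 h i (mem_univ i)
  exact hai ((mul_eq_zero.1 this).resolve_right hci.ne')

theorem exists_pos_and_neg_of_sum_mul_eq_zero {ι : Type*} [Fintype ι] {a c : ι → ℝ}
    (h : ∑ i, a i * c i = 0) (hc : ∀ i, 0 ≤ c i) (hne : ∃ i, a i ≠ 0 ∧ 0 < c i) :
    (∃ i, 0 < a i ∧ 0 < c i) ∧ ∃ i, a i < 0 ∧ 0 < c i := by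
  refine ⟨exists_pos_of_sum_mul_eq_zero h hc hne, ?_⟩
  obtain ⟨i, hai, hci⟩ := exists_pos_of_sum_mul_eq_zero (a := -a) (by simp [h]) hc
    (by simpa using hne)
  exact ⟨i, neg_pos.1 hai, hci⟩

theorem Function.support_sub_div_smul_ssubset {ι K : Type*} [Field K] {b c : ι → K}
    (hcb : c.support ⊆ b.support) {j : ι} (hcj : c j ≠ 0) :
    (b - (b j / c j) • c).support ⊂ b.support := by
  refine (Set.ssubset_iff_of_subset fun i hi => ?_).2 ⟨j, hcb hcj, by simp [hcj]⟩
  by_contra hbi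
  have hci : c i = 0 := Function.notMem_support.1 fun h => hbi (hcb h)
  exact hi (by simp [Function.notMem_support.1 hbi, hci])

theorem exists_nonneg_sub_div_smul {ι K : Type*} [Fintype ι] [Field K] [LinearOrder K]
    [IsStrictOrderedRing K] {p : ι → Prop} {b c : ι → K} (hb : ∀ i, p i → 0 ≤ b i)
    (hc : ∃ i, p i ∧ 0 < c i) :
    ∃ j, 0 < c j ∧ ∀ i, p i → 0 ≤ (b - (b j / c j) • c) i := by
  classical
  obtain ⟨j, hj, hmin⟩ := exists_min_image (univ.filter fun i => p i ∧ 0 < c i)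
    (fun i => b i / c i) (by obtain ⟨i, hi⟩ := hc; exact ⟨i, by simpa using hi⟩)
  rw [mem_filter] at hj
  refine ⟨j, hj.2.2, fun i hi => ?_⟩
  rw [Pi.sub_apply, Pi.smul_apply, smul_eq_mul, sub_nonneg]
  rcases le_or_gt (c i) 0 with hci | hci
  · exact (mul_nonpos_of_nonneg_of_nonpos (div_nonneg (hb j hj.2.1) hj.2.2.le) hci).trans (hb i hi)
  · calc b j / c j * c i ≤ b i / c i * c i :=
          mul_le_mul_of_nonneg_right (hmin i (by simp [hi, hci])) hci.le
      _ = b i := div_mul_cancel₀ _ hci.ne'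

section Dependences

variable {ι V : Type*} [Fintype ι] [AddCommGroup V] [Module ℝ V]

theorem sum_sub_smul_smul_eq_zero {v : ι → V} {b c : ι → ℝ} (hb : ∑ i, b i • v i = 0)
    (hc : ∑ i, c i • v i = 0) (r : ℝ) : ∑ i, (b - r • c) i • v i = 0 := by
  simp [sub_smul, mul_smul, sum_sub_distrib, ← smul_sum, hb, hc]

def IsDependenceSupport (v : ι → V) (s : Set ι) : Prop :=
  ∃ b : ι → ℝ, b ≠ 0 ∧ ∑ i, b i • v i = 0 ∧ s = {i | b i ≠ 0}

def IsNonnegDependenceOn (v : ι → V) (p : ι → Prop) (a : ι → ℝ) : Prop :=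
  ∑ i, a i • v i = 0 ∧ (∀ i, p i → 0 ≤ a i) ∧ ∃ i, p i ∧ a i ≠ 0

theorem exists_nonnegDependenceOn_or_exists_functional (v : ι → V) (p : ι → Prop) :
    (∃ a, IsNonnegDependenceOn v p a) ∨
      ∃ φ : V →ₗ[ℝ] ℝ, (∀ i, ¬ p i → φ (v i) = 0) ∧ ∀ i, p i → 0 < φ (v i) := by
  classical
  -- Dependences form `ker L`. Separate the face `Δ` of the simplex spanned by `{p}` from
  -- `ker L ⊔ N`: a common point is a dependence, up to a vector vanishing on `{p}`.
  let L := Fintype.linearCombination ℝ v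
  let N : Submodule ℝ (ι → ℝ) := Submodule.pi {i | p i} fun _ => ⊥
  let N' : Submodule ℝ (ι → ℝ) := Submodule.pi {i | ¬ p i} fun _ => ⊥
  let Δ : Set (ι → ℝ) := stdSimplex ℝ ι ∩ N'
  by_cases hΔ : Disjoint Δ (LinearMap.ker L ⊔ N : Submodule ℝ (ι → ℝ))
  · right
    obtain ⟨f, s, r, hfΔ, hsr, hfM⟩ := geometric_hahn_banach_compact_closed
      ((convex_stdSimplex ℝ ι).inter (Submodule.convex _))
      ((isCompact_stdSimplex ℝ ι).inter_right (Submodule.closed_of_finiteDimensional _))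
      (Submodule.convex _) (Submodule.closed_of_finiteDimensional _) hΔ
    have hf0 : ∀ x ∈ LinearMap.ker L ⊔ N, f x = 0 := fun x hx =>
      f.toLinearMap.apply_eq_zero_of_forall_lt_apply hfM hx
    obtain ⟨φ, hφ⟩ := L.exists_comp_eq_of_ker_le (-f.toLinearMap) fun x hx => by
      simp [hf0 x (Submodule.mem_sup_left hx)]
    have hφv : ∀ i, φ (v i) = -f (Pi.single i 1) := fun i => by
      simpa [L] using LinearMap.congr_fun hφ (Pi.single i 1)
    refine ⟨φ, fun i hi => ?_, fun i hi => ?_⟩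
    · rw [hφv, hf0 _ (Submodule.mem_sup_right ?_), neg_zero]
      exact fun j hj => (Submodule.mem_bot ℝ).2 (Pi.single_eq_of_ne (by rintro rfl; exact hi hj) _)
    · have hr : r < 0 := map_zero f ▸ hfM 0 (zero_mem _)
      have := hfΔ (Pi.single i 1) ⟨single_mem_stdSimplex ℝ i, fun j hj =>
        (Submodule.mem_bot ℝ).2 (Pi.single_eq_of_ne (by rintro rfl; exact hj hi) _)⟩
      rw [hφv]
      linarith
  · left
    obtain ⟨c, ⟨hcΔ, hcT⟩, hcM⟩ := Set.not_disjoint_iff.1 hΔ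
    obtain ⟨a, ha, n, hn, rfl⟩ := Submodule.mem_sup.1 hcM
    have han : ∀ i, p i → a i = (a + n) i := fun i hi => by
      simp [(Submodule.mem_bot ℝ).1 (hn i hi)]
    obtain ⟨i, -, hi⟩ := exists_ne_zero_of_sum_ne_zero (hcΔ.2.trans_ne one_ne_zero)
    have hpi : p i := by_contra fun hpi => hi ((Submodule.mem_bot ℝ).1 (hcT i hpi))
    exact ⟨a, ha, fun i hi => han i hi ▸ hcΔ.1 i, i, hpi, han i hpi ▸ hi⟩

namespace IsNonnegDependenceOn

variable {v : ι → V} {p : ι → Prop} {a b c : ι → ℝ}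

theorem exists_support_ssubset_of_eq_zero_on (hb : IsNonnegDependenceOn v p b) (hc0 : c ≠ 0)
    (hc : ∑ i, c i • v i = 0) (hcb : c.support ⊆ b.support) (hcp : ∀ i, p i → c i = 0) :
    ∃ b', IsNonnegDependenceOn v p b' ∧ b'.support ⊂ b.support := by
  obtain ⟨j, hj⟩ := Function.ne_iff.1 hc0
  have heq : ∀ i, p i → (b - (b j / c j) • c) i = b i := fun i hi => by simp [hcp i hi]
  obtain ⟨hbdep, hbp, i, hpi, hbi⟩ := hb
  exact ⟨_, ⟨sum_sub_smul_smul_eq_zero hbdep hc _, fun i hi => heq i hi ▸ hbp i hi, i, hpi,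
    heq i hpi ▸ hbi⟩, Function.support_sub_div_smul_ssubset hcb hj⟩

theorem exists_support_ssubset (hb : IsNonnegDependenceOn v p b) (hc0 : c ≠ 0)
    (hc : ∑ i, c i • v i = 0) (hcb : c.support ⊂ b.support) :
    ∃ b', IsNonnegDependenceOn v p b' ∧ b'.support ⊂ b.support := by
  by_cases hcp : ∀ i, p i → c i = 0
  · exact hb.exists_support_ssubset_of_eq_zero_on hc0 hc hcb.subset hcp
  obtain ⟨d, hd, hdc, hdpos⟩ : ∃ d : ι → ℝ, ∑ i, d i • v i = 0 ∧ d.support = c.support ∧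
      ∃ i, p i ∧ 0 < d i := by
    push Not at hcp
    obtain ⟨i, hpi, hci⟩ := hcp
    rcases hci.lt_or_gt with h | h
    · exact ⟨-c, by simp [hc], Function.support_neg c, i, hpi, neg_pos.2 h⟩
    · exact ⟨c, hc, rfl, i, hpi, h⟩
  obtain ⟨j, hdj, hnonneg⟩ := exists_nonneg_sub_div_smul hb.2.1 hdpos
  have hb'b := Function.support_sub_div_smul_ssubset (hdc ▸ hcb.subset) hdj.ne'
  have hb'dep := sum_sub_smul_smul_eq_zero hb.1 hd (b j / d j)
  by_cases hb'p : ∃ i, p i ∧ (b - (b j / d j) • d) i ≠ 0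
  · exact ⟨_, ⟨hb'dep, hnonneg, hb'p⟩, hb'b⟩
  push Not at hb'p
  have hb'0 : b - (b j / d j) • d ≠ 0 := fun h0 => hcb.not_subset <| by
    rw [← hdc, sub_eq_zero.1 h0]
    exact Function.support_smul_subset_right _ _
  exact hb.exists_support_ssubset_of_eq_zero_on hb'0 hb'dep hb'b.subset hb'p

theorem exists_minimal (ha : IsNonnegDependenceOn v p a) :
    ∃ b, IsNonnegDependenceOn v p b ∧ Minimal (IsDependenceSupport v) b.support := by
  obtain ⟨_, ⟨b, hb, rfl⟩, hmin⟩ :=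
    exists_minimal_of_wellFoundedLT (fun s => ∃ b, IsNonnegDependenceOn v p b ∧ b.support = s)
      ⟨_, a, ha, rfl⟩
  obtain ⟨i, -, hi⟩ := hb.2.2
  refine ⟨b, hb, ⟨b, Function.ne_iff.2 ⟨i, hi⟩, hb.1, rfl⟩, ?_⟩
  rintro _ ⟨c, hc0, hc, rfl⟩ hcb
  by_contra hbc
  obtain ⟨b', hb', hss⟩ := hb.exists_support_ssubset hc0 hc (hcb.ssubset_of_not_superset hbc)
  exact hss.not_subset (hmin ⟨b', hb', rfl⟩ hss.subset)

end IsNonnegDependenceOn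

end Dependences

/-- Let `v 1, …, v n` be vectors in a real vector space `V` and `ω ∈ ℝⁿ`.  The following
are equivalent:
(i) for every nonzero linear dependence `a` of the `v i` whose support is minimal among
supports of nonzero linear dependences, the set of indices of the support where `ω` is
maximal contains an index with `a i > 0` and an index with `a j < 0`;
(ii) for every `t ∈ ℝ` there is a linear functional `lam` on `V` vanishing on all `v i`
with `ω i ≤ t` and strictly positive on all `v i` with `ω i > t`. -/
theorem stmt4 {V : Type*} [AddCommGroup V] [Module ℝ V] (n : ℕ)
    (v : Fin n → V) (ω : Fin n → ℝ) :
    (∀ a : Fin n → ℝ, a ≠ 0 → ∑ i, a i • v i = 0 →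
        Minimal (fun s : Set (Fin n) =>
          ∃ b : Fin n → ℝ, b ≠ 0 ∧ ∑ i, b i • v i = 0 ∧ s = {i | b i ≠ 0})
          {i | a i ≠ 0} →
        (∃ i, 0 < a i ∧ ∀ j, a j ≠ 0 → ω j ≤ ω i) ∧
        (∃ j, a j < 0 ∧ ∀ k, a k ≠ 0 → ω k ≤ ω j)) ↔
      (∀ t : ℝ, ∃ lam : V →ₗ[ℝ] ℝ,
        (∀ i, ω i ≤ t → lam (v i) = 0) ∧ (∀ i, t < ω i → 0 < lam (v i))) := by
  constructor
  · intro h t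
    rcases exists_nonnegDependenceOn_or_exists_functional v (t < ω ·) with ⟨a, ha⟩ | ⟨lam, hS, hT⟩
    · obtain ⟨b, ⟨hb, hbT, i, hti, hbi⟩, hmin⟩ := ha.exists_minimal
      obtain ⟨-, j, hbj, hj⟩ := h b (Function.ne_iff.2 ⟨i, hbi⟩) hb hmin
      have hjt : ω j ≤ t := not_lt.1 fun htj => (hbT j htj).not_gt hbj
      linarith [hj i hbi]
    · exact ⟨lam, fun i hi => hS i hi.not_gt, hT⟩
  · rintro h a ha0 hdep -
    obtain ⟨i₀, hi₀, hmax⟩ : ∃ i₀, a i₀ ≠ 0 ∧ ∀ j, a j ≠ 0 → ω j ≤ ω i₀ := by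
      obtain ⟨i, hi⟩ := Function.ne_iff.1 ha0
      obtain ⟨i₀, h₀, hmax⟩ :=
        exists_max_image (univ.filter fun j => a j ≠ 0) ω ⟨i, by simpa using hi⟩
      exact ⟨i₀, (mem_filter.1 h₀).2, fun j hj => hmax j (by simpa using hj)⟩
    obtain ⟨t, ht, hgap⟩ := exists_lt_forall_le_of_lt ω (ω i₀)
    obtain ⟨lam, hS, hT⟩ := h t
    have hnonneg : ∀ i, 0 ≤ lam (v i) := fun i =>
      (le_or_gt (ω i) t).elim (fun hi => (hS i hi).ge) fun hi => (hT i hi).le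
    have htop : ∀ i, a i ≠ 0 → 0 < lam (v i) → ∀ j, a j ≠ 0 → ω j ≤ ω i :=
      fun i _ hi j haj => (hmax j haj).trans (not_lt.1 fun hlt => hi.ne' (hS i (hgap i hlt)))
    have hsum : ∑ i, a i * lam (v i) = 0 := by simpa using congrArg lam hdep
    obtain ⟨⟨i, hai, hi⟩, j, haj, hj⟩ :=
      exists_pos_and_neg_of_sum_mul_eq_zero hsum hnonneg ⟨i₀, hi₀, hT i₀ ht⟩
    exact ⟨⟨i, hai, htop i hai.ne' hi⟩, j, haj, htop j haj.ne hj⟩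
end

section
/- Let I ⊆ ℝ[x_1, …, x_n] be an ideal generated by homogeneous linear forms and let ω ∈ ℝ^n. Then the initial ideal init_ω(I) contains no nonzero polynomial all of whose coefficients are nonnegative if and only if for every nonzero linear form f ∈ I whose support is minimal (with respect to inclusion) among the supports of nonzero linear forms in I, the initial form init_ω(f) has both a strictly positive coefficient and a strictly negative coefficient. -/
/-- The `ω`-weight of a monomial exponent vector `a`. -/
def monWt {n : ℕ} (ω : Fin n → ℝ) (a : Fin n →₀ ℕ) : ℝ :=
  ∑ i : Fin n, ω i * (a i : ℝ)

open scoped Classical in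
/-- The initial form of a polynomial `f` with respect to `ω`: the sum of the terms of `f`
whose monomials have maximal `ω`-weight. -/
noncomputable def initForm {n : ℕ} (ω : Fin n → ℝ) (f : MvPolynomial (Fin n) ℝ) :
    MvPolynomial (Fin n) ℝ :=
  ∑ a ∈ f.support.filter (fun a => ∀ b ∈ f.support, monWt ω b ≤ monWt ω a),
    MvPolynomial.monomial a (f.coeff a)

/-- The initial ideal of `I` with respect to `ω`: the ideal generated by the initial forms
of the nonzero elements of `I`. -/
noncomputable def initIdeal {n : ℕ} (ω : Fin n → ℝ) (I : Ideal (MvPolynomial (Fin n) ℝ)) :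
    Ideal (MvPolynomial (Fin n) ℝ) :=
  Ideal.span {g | ∃ f ∈ I, f ≠ 0 ∧ g = initForm ω f}

/-!
Let `V ⊆ ℝⁿ` be the space of coefficient vectors of the linear forms in `I`. If `in_ω(I)` has no
nonzero nonnegative element, then neither `in_ω(f)` nor `-in_ω(f)` is nonnegative.

Conversely, suppose a nonzero `v ∈ V` had a nonnegative initial vector. Subtracting multiples of
vectors of `V` with smaller support preserves this property while shrinking the support, so some
circuit would have it too, which is excluded. So the span of the initial vectors of `V` contains no
nonzero nonnegative vector, and by Stiemke's theorem some `p > 0` is orthogonal to all of them.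
An echelon basis of `V` adapted to `ω` lifts `p` to a curve `x(s) ⊥ V` with `e^{-s ω} x(s) → p`.
Every `f ∈ I` vanishes on `x(s)`, and comparing leading terms in `s` gives `in_ω(f)(p) = 0`.
Hence all of `in_ω(I)` vanishes at the positive point `p`, which a nonzero polynomial with
nonnegative coefficients cannot do.
-/

open Finset Function Filter Topology

namespace TropicalLinear

open scoped Classical

section Vectors

variable {ι : Type*}

def IsLeadingIndex (ω v : ι → ℝ) (i : ι) : Prop :=
  v i ≠ 0 ∧ ∀ j, v j ≠ 0 → ω j ≤ ω i

noncomputable def initVec (ω v : ι → ℝ) : ι → ℝ :=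
  fun i => if IsLeadingIndex ω v i then v i else 0

noncomputable def weightProj (ω : ι → ℝ) (c : ℝ) : (ι → ℝ) →ₗ[ℝ] ι → ℝ :=
  LinearMap.pi fun i => if ω i = c then LinearMap.proj i else 0

variable (ω : ι → ℝ)

lemma weightProj_apply (c : ℝ) (x : ι → ℝ) (i : ι) :
    weightProj ω c x i = if ω i = c then x i else 0 := by
  by_cases h : ω i = c <;> simp [weightProj, h]

lemma exists_isLeadingIndex [Fintype ι] {v : ι → ℝ} (hv : v ≠ 0) : ∃ i, IsLeadingIndex ω v i := by
  obtain ⟨i, hi⟩ := Function.ne_iff.mp hv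
  obtain ⟨j, hj, hmax⟩ := Finset.exists_max_image (univ.filter (v · ≠ 0)) ω ⟨i, by simpa using hi⟩
  exact ⟨j, (mem_filter.mp hj).2, fun k hk => hmax k (by simpa using hk)⟩

lemma initVec_neg (v : ι → ℝ) : initVec ω (-v) = -initVec ω v := by
  have : IsLeadingIndex ω (-v) = IsLeadingIndex ω v := by
    ext i; simp [IsLeadingIndex]
  ext i
  simp only [initVec, this, Pi.neg_apply]
  split_ifs <;> simp

lemma initVec_zero : initVec ω (0 : ι → ℝ) = 0 := by
  ext i; simp [initVec, IsLeadingIndex]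

lemma weightProj_weightProj (c c' : ℝ) (x : ι → ℝ) :
    weightProj ω c (weightProj ω c' x) = if c' = c then weightProj ω c x else 0 := by
  ext i
  by_cases h : c' = c <;> by_cases hi : ω i = c <;> simp [weightProj_apply, h, hi]
  exact fun h' => absurd h'.symm h

lemma initVec_eq_weightProj {c : ℝ} {v : ι → ℝ} (hle : ∀ i, v i ≠ 0 → ω i ≤ c)
    (hc : weightProj ω c v ≠ 0) : initVec ω v = weightProj ω c v := by
  obtain ⟨i₀, hi₀⟩ := Function.ne_iff.mp hc
  simp only [weightProj_apply, Pi.zero_apply, ne_eq, ite_eq_right_iff, Classical.not_imp] at hi₀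
  ext i
  rw [initVec, weightProj_apply]
  by_cases hvi : v i = 0
  · simp [hvi]
  by_cases hi : ω i = c
  · rw [if_pos ⟨hvi, fun j hj => hi ▸ hle j hj⟩, if_pos hi]
  · have : ¬ ω i₀ ≤ ω i := fun h => hi (le_antisymm (hle i hvi) (hi₀.1 ▸ h))
    rw [if_neg fun h => this (h.2 i₀ hi₀.2), if_neg hi]

lemma initVec_eq_weightProj_of_isLeadingIndex {v : ι → ℝ} {i₀ : ι} (h : IsLeadingIndex ω v i₀) :
    initVec ω v = weightProj ω (ω i₀) v :=
  initVec_eq_weightProj ω h.2 fun h0 => h.1 (by simpa [weightProj_apply] using congrFun h0 i₀)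

lemma support_sub_smul_ssubset {v w : ι → ℝ} {t : ℝ} {i : ι} (hwv : support w ⊆ support v)
    (hi : v i ≠ 0) (ht : v i = t * w i) : support (v - t • w) ⊂ support v := by
  have hsub : support (v - t • w) ⊆ support v := fun j hj => by
    by_contra hvj
    have hwj : w j = 0 := by simpa using mt (@hwv j) hvj
    simp_all
  exact (Set.ssubset_iff_of_subset hsub).mpr ⟨i, hi, by simp [ht]⟩

/-- Take for `t` the largest multiple keeping the weight-`c` part of `v - t • w` nonnegative;
a negative weight-`c` coordinate of `w` keeps that part nonzero. -/
lemma exists_sub_smul_weightProj_nonneg [Fintype ι] {c : ℝ} {v w : ι → ℝ}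
    (hvc : 0 ≤ weightProj ω c v) (hwv : support w ⊆ support v) {iP iN : ι}
    (hP : ω iP = c ∧ 0 < w iP) (hN : ω iN = c ∧ w iN < 0) :
    ∃ t i, v i ≠ 0 ∧ v i = t * w i ∧
      0 ≤ weightProj ω c (v - t • w) ∧ weightProj ω c (v - t • w) ≠ 0 := by
  have hv : ∀ i, ω i = c → 0 ≤ v i := fun i hi => by simpa [weightProj_apply, hi] using hvc i
  obtain ⟨i, hi, hmin⟩ := Finset.exists_min_image (univ.filter fun i => ω i = c ∧ 0 < w i)
    (fun i => v i / w i) ⟨iP, by simpa using hP⟩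
  simp only [mem_filter, mem_univ, true_and] at hi hmin
  have ht : 0 ≤ v i / w i := div_nonneg (hv i hi.1) hi.2.le
  have hvN : 0 < v iN := (hv iN hN.1).lt_of_ne' (hwv (by simp [hN.2.ne]))
  refine ⟨v i / w i, i, hwv (by simp [hi.2.ne']), (div_mul_cancel₀ _ hi.2.ne').symm, ?_, ?_⟩
  · intro j
    simp only [Pi.zero_apply, weightProj_apply, Pi.sub_apply, Pi.smul_apply, smul_eq_mul]
    split_ifs with hj
    · rcases le_or_gt (w j) 0 with hwj | hwj
      · nlinarith [hv j hj]
      · have := hmin j ⟨hj, hwj⟩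
        rw [le_div_iff₀ hwj] at this
        linarith
    · exact le_rfl
  · refine Function.ne_iff.mpr ⟨iN, ?_⟩
    simp only [Pi.zero_apply, weightProj_apply, hN.1, if_true, Pi.sub_apply, Pi.smul_apply,
      smul_eq_mul]
    nlinarith [hN.2]

variable {V : Submodule ℝ (ι → ℝ)}

lemma exists_nonneg_initVec_support_ssubset [Fintype ι] {v w : ι → ℝ} (hv : v ∈ V)
    (hv0 : v ≠ 0) (hnn : 0 ≤ initVec ω v) (hw : w ∈ V) (hw0 : w ≠ 0)
    (hwv : support w ⊂ support v) :
    ∃ v' ∈ V, v' ≠ 0 ∧ 0 ≤ initVec ω v' ∧ support v' ⊂ support v := by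
  obtain ⟨i₀, hi₀⟩ := exists_isLeadingIndex ω hv0
  set c := ω i₀
  have hwle : ∀ i, w i ≠ 0 → ω i ≤ c := fun i hi => hi₀.2 i (hwv.subset hi)
  rw [initVec_eq_weightProj_of_isLeadingIndex ω hi₀] at hnn
  have of_sub_smul : ∀ t i, v i ≠ 0 → v i = t * w i → 0 ≤ weightProj ω c (v - t • w) →
      weightProj ω c (v - t • w) ≠ 0 →
      ∃ v' ∈ V, v' ≠ 0 ∧ 0 ≤ initVec ω v' ∧ support v' ⊂ support v := by
    intro t i hvi hti hnn' hne
    have hss := support_sub_smul_ssubset hwv.subset hvi hti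
    refine ⟨v - t • w, V.sub_mem hv (V.smul_mem t hw), fun h => hne (by simp [h]), ?_, hss⟩
    rwa [initVec_eq_weightProj ω (fun i hi => hi₀.2 i (hss.subset hi)) hne]
  by_cases h0 : weightProj ω c w = 0
  · obtain ⟨i, hi⟩ := Function.ne_iff.mp hw0
    have hvc : weightProj ω c v ≠ 0 := fun h =>
      hi₀.1 (by simpa [weightProj_apply, c] using congrFun h i₀)
    refine of_sub_smul (v i / w i) i (hwv.subset hi) (div_mul_cancel₀ _ hi).symm ?_ ?_ <;>
      rwa [map_sub, map_smul, h0, smul_zero, sub_zero]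
  by_cases hpos : 0 ≤ weightProj ω c w
  · exact ⟨w, hw, hw0, by rwa [initVec_eq_weightProj ω hwle h0], hwv⟩
  by_cases hneg : weightProj ω c w ≤ 0
  · refine ⟨-w, V.neg_mem hw, neg_ne_zero.mpr hw0, ?_, by rwa [support_neg]⟩
    rw [initVec_neg, initVec_eq_weightProj ω hwle h0]
    exact neg_nonneg.mpr hneg
  simp only [Pi.le_def, Pi.zero_apply, weightProj_apply, not_forall] at hpos hneg
  obtain ⟨iN, hiN⟩ := hpos
  obtain ⟨iP, hiP⟩ := hneg
  have hN : ω iN = c ∧ w iN < 0 := by split_ifs at hiN with h <;> simp_all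
  have hP : ω iP = c ∧ 0 < w iP := by split_ifs at hiP with h <;> simp_all
  obtain ⟨t, i, hvi, hti, hnn', hne⟩ := exists_sub_smul_weightProj_nonneg ω hnn hwv.subset hP hN
  exact of_sub_smul t i hvi hti hnn' hne

lemma exists_minimal_support_nonneg_initVec [Fintype ι] {v : ι → ℝ} (hv : v ∈ V)
    (hv0 : v ≠ 0) (hnn : 0 ≤ initVec ω v) :
    ∃ u ∈ V, u ≠ 0 ∧ 0 ≤ initVec ω u ∧
      Minimal (fun s => ∃ w ∈ V, w ≠ 0 ∧ s = support w) (support u) := by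
  induction h : (support v).ncard using Nat.strong_induction_on generalizing v with
  | _ k ih =>
  by_cases hmin : Minimal (fun s => ∃ w ∈ V, w ≠ 0 ∧ s = support w) (support v)
  · exact ⟨v, hv, hv0, hnn, hmin⟩
  obtain ⟨_, hwv, w, hw, hw0, rfl⟩ := (not_minimal_iff_exists_lt ⟨v, hv, hv0, rfl⟩).mp hmin
  obtain ⟨v', hv', hv'0, hnn', hss⟩ :=
    exists_nonneg_initVec_support_ssubset ω hv hv0 hnn hw hw0 hwv
  exact ih _ (h ▸ Set.ncard_lt_ncard hss) hv' hv'0 hnn' rfl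

lemma exists_weightProj_eq_of_mem_span_initVec [Fintype ι] {x : ι → ℝ}
    (hx : x ∈ Submodule.span ℝ (initVec ω '' V)) (c : ℝ) :
    ∃ v ∈ V, (∀ i, v i ≠ 0 → ω i ≤ c) ∧ weightProj ω c v = weightProj ω c x := by
  induction hx using Submodule.span_induction with
  | mem x hx =>
    obtain ⟨v, hv, rfl⟩ := hx
    by_cases hv0 : v = 0
    · exact ⟨0, V.zero_mem, by simp, by simp [hv0, initVec_zero]⟩
    obtain ⟨i₀, hi₀⟩ := exists_isLeadingIndex ω hv0
    rw [initVec_eq_weightProj_of_isLeadingIndex ω hi₀, weightProj_weightProj]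
    by_cases hc : ω i₀ = c
    · exact ⟨v, hv, hc ▸ hi₀.2, by rw [if_pos hc]⟩
    · exact ⟨0, V.zero_mem, by simp, by simp [hc]⟩
  | zero => exact ⟨0, V.zero_mem, by simp, rfl⟩
  | add x y _ _ hx hy =>
    obtain ⟨v, hv, hvc, hvx⟩ := hx
    obtain ⟨w, hw, hwc, hwy⟩ := hy
    refine ⟨v + w, V.add_mem hv hw, fun i hi => ?_, by simp [hvx, hwy]⟩
    by_cases hvi : v i = 0
    · exact hwc i (by simpa [hvi] using hi)
    · exact hvc i hvi
  | smul a x _ hx =>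
    obtain ⟨v, hv, hvc, hvx⟩ := hx
    exact ⟨a • v, V.smul_mem a hv, fun i hi => hvc i (right_ne_zero_of_mul hi), by simp [hvx]⟩

/-- The initial vectors of `V` span a subspace whose weight-`c` slices are the weight-`c`
slices of `V ∩ {weights ≤ c}`, so a nonnegative vector in it is an initial vector itself. -/
lemma eq_zero_of_mem_span_initVec_of_nonneg [Fintype ι]
    (hV : ∀ v ∈ V, v ≠ 0 → ¬ 0 ≤ initVec ω v) {x : ι → ℝ}
    (hx : x ∈ Submodule.span ℝ (initVec ω '' V)) (hx0 : 0 ≤ x) : x = 0 := by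
  by_contra hne
  obtain ⟨i₀, hi₀⟩ := Function.ne_iff.mp hne
  obtain ⟨v, hv, hvc, hvx⟩ := exists_weightProj_eq_of_mem_span_initVec ω hx (ω i₀)
  have hxc : weightProj ω (ω i₀) x ≠ 0 := fun h =>
    hi₀ (by simpa [weightProj_apply] using congrFun h i₀)
  rw [← hvx] at hxc
  refine hV v hv (fun h => hxc (by simp [h])) ?_
  rw [initVec_eq_weightProj ω hvc hxc, hvx]
  intro i
  rw [weightProj_apply]
  split_ifs
  exacts [hx0 i, le_rfl]

/-- Stiemke's theorem of the alternative, by separating the standard simplex from `U`. -/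
lemma exists_pos_dotProduct_eq_zero [Fintype ι] (U : Submodule ℝ (ι → ℝ))
    (hU : ∀ x ∈ U, 0 ≤ x → x = 0) : ∃ p : ι → ℝ, (∀ i, 0 < p i) ∧ ∀ x ∈ U, p ⬝ᵥ x = 0 := by
  have hdisj : Disjoint (stdSimplex ℝ ι) U := by
    refine Set.disjoint_left.mpr fun x hx hxU => ?_
    have := hx.2
    simp [hU x hxU hx.1] at this
  obtain ⟨f, u, v, hfu, huv, hfv⟩ := geometric_hahn_banach_compact_closed
    (convex_stdSimplex ℝ ι) (isCompact_stdSimplex ℝ ι) U.convex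
    U.closed_of_finiteDimensional hdisj
  have hf : ∀ x ∈ U, f x = 0 := by
    intro x hx
    by_contra hfx
    have := hfv _ (U.smul_mem ((v - 1) / f x) hx)
    rw [map_smul, smul_eq_mul, div_mul_cancel₀ _ hfx] at this
    linarith
  have hv : v < 0 := by simpa using hfv 0 U.zero_mem
  refine ⟨fun i => -f fun j => if i = j then 1 else 0, fun i => ?_, fun x hx => ?_⟩
  · linarith [hfu _ (ite_eq_mem_stdSimplex ℝ i)]
  · have := hf x hx
    rw [← f.coe_coe, LinearMap.pi_apply_eq_sum_univ] at this
    simp only [dotProduct, neg_mul, sum_neg_distrib, neg_eq_zero]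
    simpa [mul_comm] using this

lemma exists_pos_dotProduct_initVec_eq_zero [Fintype ι]
    (hV : ∀ v ∈ V, v ≠ 0 → ¬ 0 ≤ initVec ω v) :
    ∃ p : ι → ℝ, (∀ i, 0 < p i) ∧ ∀ v ∈ V, p ⬝ᵥ initVec ω v = 0 := by
  obtain ⟨p, hp, hpU⟩ := exists_pos_dotProduct_eq_zero _
    fun x hx hx0 => eq_zero_of_mem_span_initVec_of_nonneg ω hV hx hx0
  exact ⟨p, hp, fun v hv => hpU _ (Submodule.subset_span ⟨v, hv, rfl⟩)⟩

/-- A basis of `V` in reduced row echelon form, adapted to the weight `ω`. -/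
structure EchelonBasis (V : Submodule ℝ (ι → ℝ)) (k : ℕ) where
  vec : Fin k → ι → ℝ
  pivot : Fin k → ι
  vec_mem : ∀ j, vec j ∈ V
  le_span : V ≤ Submodule.span ℝ (Set.range vec)
  vec_pivot : ∀ j m, vec j (pivot m) = if j = m then 1 else 0
  weight_le : ∀ j i, vec j i ≠ 0 → ω i ≤ ω (pivot j)

def EchelonBasis.cons {p₀ : ι} {k : ℕ}
    (b : EchelonBasis ω (V ⊓ LinearMap.ker (LinearMap.proj p₀)) k)
    (hmax : ∀ v ∈ V, ∀ i, v i ≠ 0 → ω i ≤ ω p₀) {b₀ : ι → ℝ} (hb₀ : b₀ ∈ V)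
    (hb₀p₀ : b₀ p₀ = 1) (hb₀pivot : ∀ m, b₀ (b.pivot m) = 0) :
    EchelonBasis ω V (k + 1) where
  vec := Fin.cons b₀ b.vec
  pivot := Fin.cons p₀ b.pivot
  vec_mem j := Fin.cases hb₀ (fun j => (b.vec_mem j).1) j
  le_span w hw := by
    have hw' : w - w p₀ • b₀ ∈ V ⊓ LinearMap.ker (LinearMap.proj p₀) :=
      ⟨V.sub_mem hw (V.smul_mem _ hb₀), by simp [hb₀p₀]⟩
    rw [Fin.range_cons, ← sub_add_cancel w (w p₀ • b₀)]
    refine add_mem (Submodule.span_mono (Set.subset_insert _ _) (b.le_span hw')) ?_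
    exact Submodule.smul_mem _ _ (Submodule.subset_span (Set.mem_insert _ _))
  vec_pivot j m := by
    have hbp₀ : ∀ j, b.vec j p₀ = 0 := fun j => (b.vec_mem j).2
    cases j using Fin.cases <;> cases m using Fin.cases <;>
      simp [hb₀p₀, hb₀pivot, hbp₀, b.vec_pivot, Fin.succ_ne_zero, (Fin.succ_ne_zero _).symm]
  weight_le j i := by
    cases j using Fin.cases
    · exact hmax _ hb₀ i
    · exact b.weight_le _ i

lemma exists_echelonBasis [Fintype ι] (V : Submodule ℝ (ι → ℝ)) :
    ∃ k, Nonempty (EchelonBasis ω V k) := by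
  induction h : Module.finrank ℝ V using Nat.strong_induction_on generalizing V with
  | _ r ih =>
  by_cases hV : V = ⊥
  · exact ⟨0, ⟨⟨Fin.elim0, Fin.elim0, nofun, by simp [hV], nofun, nofun⟩⟩⟩
  obtain ⟨v, hv, hv0⟩ := Submodule.exists_mem_ne_zero_of_ne_bot hV
  obtain ⟨i, hi⟩ := Function.ne_iff.mp hv0
  obtain ⟨p₀, hp₀, hmax⟩ := Finset.exists_max_image (univ.filter fun i => ∃ v ∈ V, v i ≠ 0) ω
    ⟨i, by simpa using ⟨v, hv, hi⟩⟩
  obtain ⟨v, hv, hvp₀⟩ := (mem_filter.mp hp₀).2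
  have hmax' : ∀ v ∈ V, ∀ i, v i ≠ 0 → ω i ≤ ω p₀ :=
    fun v hv i hi => hmax i (by simpa using ⟨v, hv, hi⟩)
  set V' := V ⊓ LinearMap.ker (LinearMap.proj p₀)
  have hlt : V' < V := inf_le_left.lt_of_ne fun hV' => hvp₀ (hV' ▸ hv).2
  obtain ⟨k, ⟨b⟩⟩ := ih _ (h ▸ Submodule.finrank_lt_finrank_of_lt hlt) V' rfl
  set v₁ := (v p₀)⁻¹ • v
  refine ⟨k + 1, ⟨b.cons ω hmax' (b₀ := v₁ - ∑ j, v₁ (b.pivot j) • b.vec j) ?_ ?_ ?_⟩⟩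
  · exact V.sub_mem (V.smul_mem _ hv) (V.sum_mem fun j _ => V.smul_mem _ (b.vec_mem j).1)
  · have hbp₀ : ∀ j, b.vec j p₀ = 0 := fun j => (b.vec_mem j).2
    simp [v₁, hbp₀, hvp₀]
  · intro m
    simp [Finset.sum_apply, b.vec_pivot]

lemma tendsto_exp_mul_sub {a c : ℝ} (h : a ≤ c) :
    Tendsto (fun s => Real.exp (s * (a - c))) atTop (𝓝 (if a = c then 1 else 0)) := by
  split_ifs with hac
  · simp [hac]
  · exact Real.tendsto_exp_atBot.comp
      (tendsto_id.atTop_mul_const_of_neg (sub_neg.mpr (h.lt_of_ne hac)))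

lemma tendsto_exp_neg_mul_dotProduct [Fintype ι] {c : ℝ} {v : ι → ℝ}
    (hle : ∀ i, v i ≠ 0 → ω i ≤ c) (p : ι → ℝ) :
    Tendsto (fun s => Real.exp (-(s * c)) * (v ⬝ᵥ fun i => Real.exp (s * ω i) * p i)) atTop
      (𝓝 (weightProj ω c v ⬝ᵥ p)) := by
  have hsum : ∀ s, Real.exp (-(s * c)) * (v ⬝ᵥ fun i => Real.exp (s * ω i) * p i) =
      ∑ i, Real.exp (s * (ω i - c)) * (v i * p i) := by
    intro s
    rw [dotProduct, Finset.mul_sum]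
    refine Finset.sum_congr rfl fun i _ => ?_
    rw [show s * (ω i - c) = s * ω i + -(s * c) by ring, Real.exp_add]
    ring
  refine Tendsto.congr (fun s => (hsum s).symm) ?_
  simp only [dotProduct, weightProj_apply]
  refine tendsto_finsetSum _ fun i _ => ?_
  by_cases hvi : v i = 0
  · simp [hvi]
  · convert (tendsto_exp_mul_sub (hle i hvi)).mul_const (v i * p i) using 2
    split_ifs <;> simp

namespace EchelonBasis

variable {ω} {k : ℕ} (b : EchelonBasis ω V k)

lemma isLeadingIndex_pivot (j : Fin k) : IsLeadingIndex ω (b.vec j) (b.pivot j) :=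
  ⟨by simp [b.vec_pivot], b.weight_le j⟩

/-- The point `u(s) = (e^{s ω_i} p_i)_i` corrected at the pivots so as to become orthogonal
to `V`. -/
noncomputable def curve [Fintype ι] (p : ι → ℝ) (s : ℝ) : ι → ℝ :=
  (fun i => Real.exp (s * ω i) * p i) -
    ∑ m, (b.vec m ⬝ᵥ fun i => Real.exp (s * ω i) * p i) • Pi.single (b.pivot m) 1

lemma dotProduct_curve_eq_zero [Fintype ι] (p : ι → ℝ) (s : ℝ) {v : ι → ℝ} (hv : v ∈ V) :
    v ⬝ᵥ b.curve p s = 0 := by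
  let φ : (ι → ℝ) →ₗ[ℝ] ℝ := (dotProductBilin ℝ ℝ).flip (b.curve p s)
  suffices V ≤ LinearMap.ker φ from this hv
  refine b.le_span.trans (Submodule.span_le.mpr ?_)
  rintro _ ⟨j, rfl⟩
  simp [φ, curve, dotProduct_single, b.vec_pivot]

/-- The correction at `pivot m` is `⟨vec m, u(s)⟩`, whose leading term
`e^{s ω (pivot m)} ⟨initVec (vec m), p⟩` vanishes. -/
lemma tendsto_exp_neg_mul_curve [Fintype ι] {p : ι → ℝ}
    (hp : ∀ j, p ⬝ᵥ initVec ω (b.vec j) = 0) :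
    Tendsto (fun s i => Real.exp (-(s * ω i)) * b.curve p s i) atTop (𝓝 p) := by
  refine tendsto_pi_nhds.mpr fun i => ?_
  have h : ∀ s, Real.exp (-(s * ω i)) * b.curve p s i = p i - ∑ m,
      (Real.exp (-(s * ω i)) * (b.vec m ⬝ᵥ fun i => Real.exp (s * ω i) * p i)) *
        (Pi.single (b.pivot m) (1 : ℝ) : ι → ℝ) i := by
    intro s
    simp only [curve, Pi.sub_apply, Finset.sum_apply, Pi.smul_apply, smul_eq_mul, mul_sub,
      Finset.mul_sum, ← mul_assoc, ← Real.exp_add, neg_add_cancel, Real.exp_zero, one_mul]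
  have hterm : ∀ m, Tendsto (fun s =>
      (Real.exp (-(s * ω i)) * (b.vec m ⬝ᵥ fun i => Real.exp (s * ω i) * p i)) *
        (Pi.single (b.pivot m) (1 : ℝ) : ι → ℝ) i) atTop (𝓝 0) := by
    intro m
    by_cases him : i = b.pivot m
    · subst him
      have := tendsto_exp_neg_mul_dotProduct ω (b.weight_le m) p
      rw [← initVec_eq_weightProj_of_isLeadingIndex ω (b.isLeadingIndex_pivot m), dotProduct_comm,
        hp m] at this
      simpa using this
    · simp [him]
  simp only [h]
  simpa using tendsto_const_nhds.sub (tendsto_finsetSum univ fun m _ => hterm m)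

end EchelonBasis

end Vectors

section LinearForm

open MvPolynomial

variable {σ : Type*}

noncomputable def linearForm [Fintype σ] : (σ → ℝ) →ₗ[ℝ] MvPolynomial σ ℝ :=
  Fintype.linearCombination ℝ X

lemma linearForm_apply [Fintype σ] (v : σ → ℝ) : linearForm v = ∑ i, v i • X i :=
  Fintype.linearCombination_apply ℝ X v

lemma coeff_linearForm_single [Fintype σ] (v : σ → ℝ) (i : σ) :
    (linearForm v).coeff (Finsupp.single i 1) = v i := by
  simp [linearForm_apply, coeff_sum, coeff_X, Finsupp.single_left_inj]

lemma isHomogeneous_linearForm [Fintype σ] (v : σ → ℝ) : (linearForm v).IsHomogeneous 1 := by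
  rw [linearForm_apply]
  exact IsHomogeneous.sum _ _ _ fun i _ => smul_eq_C_mul (X i) (v i) ▸ isHomogeneous_C_mul_X _ i

lemma eval_linearForm [Fintype σ] (x v : σ → ℝ) : eval x (linearForm v) = v ⬝ᵥ x := by
  simp [linearForm_apply, dotProduct]

lemma exists_eq_single_of_coeff_ne_zero {R : Type*} [CommSemiring R] {f : MvPolynomial σ R}
    (hf : f.IsHomogeneous 1) {a : σ →₀ ℕ} (ha : f.coeff a ≠ 0) : ∃ i, a = Finsupp.single i 1 := by
  obtain ⟨i, hi⟩ : a ∈ Set.range fun i => Finsupp.single i 1 := by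
    rw [Finsupp.range_single_one]
    show a.degree = 1
    rw [Finsupp.degree_eq_weight_one]
    exact hf ha
  exact ⟨i, hi.symm⟩

lemma linearForm_coeff_single [Fintype σ] {f : MvPolynomial σ ℝ} (hf : f.IsHomogeneous 1) :
    linearForm (fun i => f.coeff (Finsupp.single i 1)) = f := by
  ext a
  by_cases ha : ∃ i, a = Finsupp.single i 1
  · obtain ⟨i, rfl⟩ := ha
    exact coeff_linearForm_single _ i
  · rw [not_imp_comm.mp (exists_eq_single_of_coeff_ne_zero hf) ha,
      not_imp_comm.mp (exists_eq_single_of_coeff_ne_zero (isHomogeneous_linearForm _)) ha]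

lemma linearForm_eq_zero_iff [Fintype σ] {v : σ → ℝ} : linearForm v = 0 ↔ v = 0 := by
  refine ⟨fun h => funext fun i => ?_, fun h => by simp [h]⟩
  have := coeff_linearForm_single v i
  rwa [h, coeff_zero, eq_comm] at this

noncomputable def linearForms [Fintype σ] (I : Ideal (MvPolynomial σ ℝ)) : Submodule ℝ (σ → ℝ) :=
  (I.restrictScalars ℝ).comap linearForm

lemma mem_linearForms [Fintype σ] {I : Ideal (MvPolynomial σ ℝ)} {v : σ → ℝ} :
    v ∈ linearForms I ↔ linearForm v ∈ I :=
  Iff.rfl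

lemma exists_linearForm_support_iff [Fintype σ] (I : Ideal (MvPolynomial σ ℝ)) (s : Set σ) :
    (∃ g ∈ I, g ≠ 0 ∧ g.IsHomogeneous 1 ∧ s = {i | g.coeff (Finsupp.single i 1) ≠ 0}) ↔
      ∃ w ∈ linearForms I, w ≠ 0 ∧ s = support w := by
  constructor
  · rintro ⟨g, hg, hg0, hgh, rfl⟩
    refine ⟨fun i => g.coeff (Finsupp.single i 1), ?_, fun h => hg0 ?_, rfl⟩
    · rwa [mem_linearForms, linearForm_coeff_single hgh]
    · rw [← linearForm_coeff_single hgh, h, map_zero]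
  · rintro ⟨w, hw, hw0, rfl⟩
    refine ⟨linearForm w, hw, linearForm_eq_zero_iff.not.mpr hw0, isHomogeneous_linearForm w, ?_⟩
    simp [coeff_linearForm_single, Function.support]

lemma coeff_linearForm_nonneg [Fintype σ] {v : σ → ℝ} (hv : 0 ≤ v) (a : σ →₀ ℕ) :
    0 ≤ (linearForm v).coeff a := by
  by_cases ha : (linearForm v).coeff a = 0
  · exact ha.ge
  obtain ⟨i, rfl⟩ := exists_eq_single_of_coeff_ne_zero (isHomogeneous_linearForm v) ha
  simpa [coeff_linearForm_single] using hv i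

lemma minimal_linearForm_support_iff [Fintype σ] (I : Ideal (MvPolynomial σ ℝ)) (v : σ → ℝ) :
    Minimal (fun s => ∃ g ∈ I, g ≠ 0 ∧ g.IsHomogeneous 1 ∧
        s = {i | g.coeff (Finsupp.single i 1) ≠ 0})
      {i | (linearForm v).coeff (Finsupp.single i 1) ≠ 0} ↔
    Minimal (fun s => ∃ w ∈ linearForms I, w ≠ 0 ∧ s = support w) (support v) := by
  simp_rw [exists_linearForm_support_iff, coeff_linearForm_single]
  rfl

lemma span_le_ker_eval [Fintype σ] {S : Set (MvPolynomial σ ℝ)}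
    (hS : ∀ f ∈ S, f.IsHomogeneous 1) {x : σ → ℝ}
    (hx : ∀ v ∈ linearForms (Ideal.span S), v ⬝ᵥ x = 0) :
    Ideal.span S ≤ RingHom.ker (eval x) := by
  refine Ideal.span_le.mpr fun f hf => ?_
  rw [SetLike.mem_coe, RingHom.mem_ker, ← linearForm_coeff_single (hS f hf), eval_linearForm]
  refine hx _ ?_
  rw [mem_linearForms, linearForm_coeff_single (hS f hf)]
  exact Ideal.subset_span hf

end LinearForm

section InitialForm

open MvPolynomial

variable {n : ℕ} (ω : Fin n → ℝ)

lemma monWt_single (i : Fin n) : monWt ω (Finsupp.single i 1) = ω i := by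
  simp [monWt, Finsupp.single_apply]

lemma coeff_initForm (f : MvPolynomial (Fin n) ℝ) (a : Fin n →₀ ℕ) :
    (initForm ω f).coeff a =
      if a ∈ f.support ∧ ∀ b ∈ f.support, monWt ω b ≤ monWt ω a then f.coeff a else 0 := by
  simp only [initForm, coeff_sum, coeff_monomial, Finset.sum_ite_eq', mem_filter]

lemma initForm_ne_zero {f : MvPolynomial (Fin n) ℝ} (hf : f ≠ 0) : initForm ω f ≠ 0 := by
  obtain ⟨a, ha, hmax⟩ := Finset.exists_max_image f.support (monWt ω) (support_nonempty.mpr hf)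
  refine ne_of_apply_ne (coeff a) ?_
  rw [coeff_initForm, if_pos ⟨ha, hmax⟩, coeff_zero]
  exact mem_support_iff.mp ha

lemma initForm_linearForm (v : Fin n → ℝ) :
    initForm ω (linearForm v) = linearForm (initVec ω v) := by
  ext a
  rw [coeff_initForm]
  by_cases ha : ∃ i, a = Finsupp.single i 1
  · obtain ⟨i, rfl⟩ := ha
    have hsupp : ∀ b ∈ (linearForm v).support, ∃ j, v j ≠ 0 ∧ b = Finsupp.single j 1 := by
      intro b hb
      obtain ⟨j, rfl⟩ := exists_eq_single_of_coeff_ne_zero (isHomogeneous_linearForm v)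
        (mem_support_iff.mp hb)
      exact ⟨j, by simpa [coeff_linearForm_single] using hb, rfl⟩
    have hlead : (Finsupp.single i 1 ∈ (linearForm v).support ∧
        ∀ b ∈ (linearForm v).support, monWt ω b ≤ monWt ω (Finsupp.single i 1)) ↔
        IsLeadingIndex ω v i := by
      refine and_congr (by simp [coeff_linearForm_single]) ⟨fun h j hj => ?_, fun h b hb => ?_⟩
      · simpa [monWt_single] using
          h (Finsupp.single j 1) (by simpa [coeff_linearForm_single] using hj)
      · obtain ⟨j, hj, rfl⟩ := hsupp b hb
        simpa [monWt_single] using h j hj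
    simp only [hlead, coeff_linearForm_single, initVec]
  · push Not at ha
    have hzero : ∀ w : Fin n → ℝ, (linearForm w).coeff a = 0 := fun w => by
      by_contra h
      obtain ⟨i, hi⟩ := exists_eq_single_of_coeff_ne_zero (isHomogeneous_linearForm w) h
      exact ha i hi
    simp [hzero]

lemma prod_exp_mul_pow (s : ℝ) (y : Fin n → ℝ) (a : Fin n →₀ ℕ) :
    ∏ i, (Real.exp (s * ω i) * y i) ^ a i = Real.exp (s * monWt ω a) * ∏ i, y i ^ a i := by
  simp_rw [mul_pow, prod_mul_distrib, ← Real.exp_nat_mul, ← Real.exp_sum, monWt, Finset.mul_sum]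
  congr 2
  exact Finset.sum_congr rfl fun i _ => by ring

/-- With `W` the top `ω`-weight of `f`, `e^{-s W} f(x(s)) → in_ω(f)(p)`. -/
lemma eval_initForm_eq_zero_of_tendsto {f : MvPolynomial (Fin n) ℝ} {x : ℝ → Fin n → ℝ}
    {p : Fin n → ℝ} (hx : Tendsto (fun s i => Real.exp (-(s * ω i)) * x s i) atTop (𝓝 p))
    (hf : ∀ s, eval (x s) f = 0) : eval p (initForm ω f) = 0 := by
  by_cases hf0 : f = 0
  · simp [hf0, initForm]
  obtain ⟨a₀, ha₀, hmax⟩ :=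
    Finset.exists_max_image f.support (monWt ω) (support_nonempty.mpr hf0)
  set y := fun s i => Real.exp (-(s * ω i)) * x s i
  have hxy : ∀ s, x s = fun i => Real.exp (s * ω i) * y s i := fun s => funext fun i => by
    simp [y, ← mul_assoc, ← Real.exp_add]
  have hscaled : ∀ s, Real.exp (-(s * monWt ω a₀)) * eval (x s) f = ∑ a ∈ f.support,
      Real.exp (s * (monWt ω a - monWt ω a₀)) * (f.coeff a * ∏ i, y s i ^ a i) := by
    intro s
    rw [hxy, eval_eq', Finset.mul_sum]
    refine Finset.sum_congr rfl fun a _ => ?_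
    rw [prod_exp_mul_pow, mul_sub, sub_eq_add_neg, Real.exp_add]
    ring
  have hinit : eval p (initForm ω f) = ∑ a ∈ f.support,
      (if monWt ω a = monWt ω a₀ then 1 else 0) * (f.coeff a * ∏ i, p i ^ a i) := by
    simp only [initForm, Finset.sum_filter, map_sum]
    refine Finset.sum_congr rfl fun a ha => ?_
    rw [apply_ite (MvPolynomial.eval p), map_zero, eval_monomial, Finsupp.prod_pow, ite_mul,
      one_mul, zero_mul]
    refine if_congr ?_ rfl rfl
    exact ⟨fun h => le_antisymm (hmax a ha) (h a₀ ha₀), fun h b hb => h ▸ hmax b hb⟩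
  have hlim := tendsto_finsetSum f.support fun a ha => (tendsto_exp_mul_sub (hmax a ha)).mul
    (((by fun_prop : Continuous fun y : Fin n → ℝ => f.coeff a * ∏ i, y i ^ a i).tendsto p).comp hx)
  rw [← hinit] at hlim
  refine tendsto_nhds_unique hlim ?_
  simp only [Function.comp_def, ← hscaled, hf, mul_zero, tendsto_const_nhds]

end InitialForm

lemma exists_coeff_pos_and_neg_of_mem {σ : Type*} {J : Ideal (MvPolynomial σ ℝ)}
    (hJ : ∀ g ∈ J, (∀ a, 0 ≤ g.coeff a) → g = 0) {g : MvPolynomial σ ℝ} (hg : g ∈ J)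
    (hg0 : g ≠ 0) : (∃ a, 0 < g.coeff a) ∧ ∃ a, g.coeff a < 0 := by
  constructor <;> by_contra h <;> push Not at h
  · exact hg0 (neg_eq_zero.mp (hJ _ (J.neg_mem hg) fun a => by simpa using h a))
  · exact hg0 (hJ g hg h)

lemma eq_zero_of_coeff_nonneg_of_eval_eq_zero {σ : Type*} {g : MvPolynomial σ ℝ} {p : σ → ℝ}
    (hp : ∀ i, 0 < p i) (hg : ∀ a, 0 ≤ g.coeff a) (h : MvPolynomial.eval p g = 0) : g = 0 := by
  have hmon : ∀ a : σ →₀ ℕ, 0 < ∏ i ∈ a.support, p i ^ a i :=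
    fun a => prod_pos fun i _ => pow_pos (hp i) _
  rw [MvPolynomial.eval_eq] at h
  have hterm := (Finset.sum_eq_zero_iff_of_nonneg fun a _ => mul_nonneg (hg a) (hmon a).le).mp h
  ext a
  by_contra ha
  exact mul_ne_zero ha (hmon a).ne' (hterm a (MvPolynomial.mem_support_iff.mpr ha))

end TropicalLinear

open TropicalLinear

/-- Let `I` be an ideal of `ℝ[x_1, …, x_n]` generated by homogeneous linear forms, and let
`ω ∈ ℝⁿ`.  Then `initIdeal ω I` contains no nonzero polynomial all of whose coefficients
are nonnegative if and only if for every nonzero linear form `f ∈ I` whose support is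
minimal among the supports of nonzero linear forms in `I`, the initial form of `f` has
both a strictly positive and a strictly negative coefficient. -/
theorem stmt5 {n : ℕ} (ω : Fin n → ℝ) (I : Ideal (MvPolynomial (Fin n) ℝ))
    (S : Set (MvPolynomial (Fin n) ℝ)) (hS : ∀ f ∈ S, MvPolynomial.IsHomogeneous f 1)
    (hI : I = Ideal.span S) :
    (∀ g ∈ initIdeal ω I, (∀ a : Fin n →₀ ℕ, 0 ≤ g.coeff a) → g = 0) ↔
      (∀ f ∈ I, f ≠ 0 → MvPolynomial.IsHomogeneous f 1 →
        Minimal (fun s : Set (Fin n) =>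
            ∃ g ∈ I, g ≠ 0 ∧ MvPolynomial.IsHomogeneous g 1 ∧
              s = {i | g.coeff (Finsupp.single i 1) ≠ 0})
          {i | f.coeff (Finsupp.single i 1) ≠ 0} →
        (∃ a : Fin n →₀ ℕ, 0 < (initForm ω f).coeff a) ∧
        (∃ a : Fin n →₀ ℕ, (initForm ω f).coeff a < 0)) := by
  subst hI
  refine ⟨fun h f hf hf0 _ _ => exists_coeff_pos_and_neg_of_mem h
    (Ideal.subset_span ⟨f, hf, hf0, rfl⟩) (initForm_ne_zero ω hf0), fun h g hg hg0 => ?_⟩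
  have hV : ∀ v ∈ linearForms (Ideal.span S), v ≠ 0 → ¬ 0 ≤ initVec ω v := by
    intro v hv hv0 hnn
    obtain ⟨u, hu, hu0, hunn, hmin⟩ := exists_minimal_support_nonneg_initVec ω hv hv0 hnn
    obtain ⟨-, a, ha⟩ := h _ hu (linearForm_eq_zero_iff.not.mpr hu0) (isHomogeneous_linearForm u)
      ((minimal_linearForm_support_iff _ u).mpr hmin)
    rw [initForm_linearForm] at ha
    exact ha.not_ge (coeff_linearForm_nonneg hunn a)
  obtain ⟨p, hp, hpV⟩ := exists_pos_dotProduct_initVec_eq_zero ω hV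
  obtain ⟨k, ⟨b⟩⟩ := exists_echelonBasis ω (linearForms (Ideal.span S))
  refine eq_zero_of_coeff_nonneg_of_eval_eq_zero hp hg0 ?_
  suffices initIdeal ω (Ideal.span S) ≤ RingHom.ker (MvPolynomial.eval p) from this hg
  refine Ideal.span_le.mpr ?_
  rintro _ ⟨f, hf, -, rfl⟩
  refine eval_initForm_eq_zero_of_tendsto ω
    (b.tendsto_exp_neg_mul_curve fun j => hpV _ (b.vec_mem j)) fun s => ?_
  exact span_le_ker_eval hS (fun v hv => b.dotProduct_curve_eq_zero p s hv) hf
end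

section
/- Let n ≥ 1, orient the complete graph on vertex set {1, …, n} by directing each edge from its smaller to its larger endpoint, and let ω assign a real weight ω({i,j}) to each 2-element subset {i,j}. Then the following are equivalent: (i) for all 1 ≤ i < j < k ≤ n, ω({i,k}) = max(ω({i,j}), ω({j,k})); (ii) for every cycle, i.e. every sequence v_0, v_1, …, v_{m-1} of m ≥ 3 distinct vertices with edges e_a = {v_a, v_{a+1 mod m}} for 0 ≤ a ≤ m−1, the maximum of ω over the edges e_0, …, e_{m-1} is attained both at some forward edge (an e_a with v_a < v_{a+1 mod m}) and at some backward edge (an e_b with v_b > v_{b+1 mod m}). -/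
/-!
Condition (i) says that `ω s(x, y)` is the maximum of `ω` over the edges `s(t, t')` with
`x ≤ t < t' ≤ y`, so it is monotone under enlarging the interval. Given an edge `s(x, y)` with
`x < y` and a finite set of vertices `S`, there is a cut `x ≤ p < y` such that every edge
from a vertex `≤ p` to a vertex of `S` above `p` weighs at least `ω s(x, y)`. A cycle through a maximal
edge crosses the cut at that edge, and a cycle crossing a cut in one direction also crosses it
in the other, which yields a maximal edge of the opposite orientation. Conversely, (ii) for the
triangle `i → j → k → i`, whose only backward edge is `s(k, i)`, is exactly (i).
-/

variable {α β : Type*} [LinearOrder α] [LinearOrder β]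

theorem exists_not_and_add_of_not_add {G : Type*} [AddGroup G] [Finite G] {P : G → Prop}
    {a c : G} (ha : P a) (hac : ¬P (a + c)) : ∃ b, ¬P b ∧ P (b + c) := by
  by_contra! hclosed
  have hiter : ∀ n : ℕ, ¬P (a + c + n • c) := by
    intro n
    induction n with
    | zero => simpa using hac
    | succ n ih => simpa [succ_nsmul, add_assoc] using hclosed _ ih
  have horder : 0 < addOrderOf c := (isOfFinAddOrder_of_finite c).addOrderOf_pos
  apply hiter (addOrderOf c - 1)
  rwa [add_assoc, ← succ_nsmul', Nat.sub_add_cancel horder, addOrderOf_nsmul_eq_zero, add_zero]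

def IsTriangleMax (ω : Sym2 α → β) : Prop :=
  ∀ i j k : α, i < j → j < k → ω s(i, k) = max (ω s(i, j)) (ω s(j, k))

namespace IsTriangleMax

variable {ω : Sym2 α → β}

theorem mono (h : IsTriangleMax ω) {u x y w : α} (hux : u ≤ x) (hxy : x < y) (hyw : y ≤ w) :
    ω s(x, y) ≤ ω s(u, w) :=
  calc ω s(x, y) ≤ ω s(x, w) := by
        rcases hyw.eq_or_lt with rfl | hyw
        · rfl
        · rw [h x y w hxy hyw]; exact le_max_left _ _
    _ ≤ ω s(u, w) := by
        rcases hux.eq_or_lt with rfl | hux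
        · rfl
        · rw [h u x w hux (hxy.trans_le hyw)]; exact le_max_right _ _

theorem exists_cut (h : IsTriangleMax ω) (S : Finset α) {x y : α} (hx : x ∈ S) (hxy : x < y) :
    ∃ p, x ≤ p ∧ p < y ∧ ∀ u, ∀ w ∈ S, u ≤ p → p < w → ω s(x, y) ≤ ω s(u, w) := by
  classical
  -- the largest vertex of `S` that can replace `x` without changing the weight
  set T := S.filter fun z => x ≤ z ∧ z < y ∧ ω s(z, y) = ω s(x, y)
  have hxT : x ∈ T := by simp [T, hx, hxy]
  set p := T.max' ⟨x, hxT⟩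
  obtain ⟨-, hxp, hpy, hp⟩ := Finset.mem_filter.1 (T.max'_mem ⟨x, hxT⟩)
  refine ⟨p, hxp, hpy, fun u w hw hup hpw => ?_⟩
  rcases le_or_gt y w with hyw | hwy
  · rw [← hp]
    exact h.mono hup hpy hyw
  · have hwT : ω s(w, y) ≠ ω s(x, y) := fun heq =>
      (T.le_max' w (by simp [T, hw, hwy, heq, (hxp.trans_lt hpw).le])).not_gt hpw
    have hsplit := h p w y hpw hwy
    rw [hp] at hsplit
    have hpw_eq : ω s(p, w) = ω s(x, y) := by
      rcases max_choice (ω s(p, w)) (ω s(w, y)) with hm | hm <;> rw [hm] at hsplit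
      · exact hsplit.symm
      · exact absurd hsplit.symm hwT
    rw [← hpw_eq]
    exact h.mono hup hpw le_rfl

variable {G : Type*} [AddGroup G] [Finite G]

theorem exists_backward_ge (h : IsTriangleMax ω) (v : G → α) {a c : G} (ha : v a < v (a + c)) :
    ∃ b, v (b + c) < v b ∧ ω s(v a, v (a + c)) ≤ ω s(v b, v (b + c)) := by
  classical
  have := Fintype.ofFinite G
  obtain ⟨p, hap, hpa, hcut⟩ := h.exists_cut (Finset.univ.image v) (by simp) ha
  obtain ⟨b, hbp, hbp'⟩ :=
    exists_not_and_add_of_not_add (P := fun b => v b ≤ p) hap (not_le.2 hpa)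
  rw [not_le] at hbp
  refine ⟨b, hbp'.trans_lt hbp, ?_⟩
  rw [Sym2.eq_swap (a := v b)]
  exact hcut _ _ (by simp) hbp' hbp

theorem exists_forward_ge (h : IsTriangleMax ω) (v : G → α) {a c : G} (ha : v (a + c) < v a) :
    ∃ b, v b < v (b + c) ∧ ω s(v a, v (a + c)) ≤ ω s(v b, v (b + c)) := by
  classical
  have := Fintype.ofFinite G
  obtain ⟨p, hap, hpa, hcut⟩ := h.exists_cut (Finset.univ.image v) (by simp) ha
  obtain ⟨b, hbp, hbp'⟩ :=
    exists_not_and_add_of_not_add (P := fun b => p < v b) hpa (not_lt.2 hap)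
  rw [not_lt] at hbp
  refine ⟨b, hbp.trans_lt hbp', ?_⟩
  rw [Sym2.eq_swap (a := v a)]
  exact hcut _ _ (by simp) hbp hbp'

end IsTriangleMax

theorem eq_max_of_triangle {ω : Sym2 α → β} {i j k : α} (hij : i < j) (hjk : j < k)
    (hfwd : ∃ a : Fin 3, ![i, j, k] a < ![i, j, k] (a + 1) ∧ ∀ b : Fin 3,
      ω s(![i, j, k] b, ![i, j, k] (b + 1)) ≤ ω s(![i, j, k] a, ![i, j, k] (a + 1)))
    (hbwd : ∃ a : Fin 3, ![i, j, k] (a + 1) < ![i, j, k] a ∧ ∀ b : Fin 3,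
      ω s(![i, j, k] b, ![i, j, k] (b + 1)) ≤ ω s(![i, j, k] a, ![i, j, k] (a + 1))) :
    ω s(i, k) = max (ω s(i, j)) (ω s(j, k)) := by
  obtain ⟨a, haf, ha⟩ := hfwd
  obtain ⟨b, hbb, hb⟩ := hbwd
  have hki : ω s(k, i) = ω s(i, k) := by rw [Sym2.eq_swap]
  have hb2 : b = 2 := by
    fin_cases b
    · exact absurd hbb hij.not_gt
    · exact absurd hbb hjk.not_gt
    · rfl
  subst hb2
  have h0 : ω s(i, j) ≤ ω s(i, k) := hki ▸ hb 0
  have h1 : ω s(j, k) ≤ ω s(i, k) := hki ▸ hb 1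
  have hupper : ω s(i, k) ≤ max (ω s(i, j)) (ω s(j, k)) := by
    fin_cases a
    · exact (hki ▸ ha 2 : ω s(i, k) ≤ ω s(i, j)).trans (le_max_left _ _)
    · exact (hki ▸ ha 2 : ω s(i, k) ≤ ω s(j, k)).trans (le_max_right _ _)
    · exact absurd haf (hij.trans hjk).not_gt
  exact hupper.antisymm (max_le h0 h1)

theorem stmt6_general (n : ℕ) (ω : Sym2 (Fin n) → ℝ) :
    (∀ i j k : Fin n, i < j → j < k → ω s(i, k) = max (ω s(i, j)) (ω s(j, k))) ↔
      (∀ (m : ℕ) (v : Fin (m + 3) → Fin n), Function.Injective v →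
        ((∃ a : Fin (m + 3), v a < v (a + 1) ∧
            ∀ b : Fin (m + 3), ω s(v b, v (b + 1)) ≤ ω s(v a, v (a + 1))) ∧
         (∃ a : Fin (m + 3), v (a + 1) < v a ∧
            ∀ b : Fin (m + 3), ω s(v b, v (b + 1)) ≤ ω s(v a, v (a + 1))))) := by
  refine ⟨fun h m v hv => ?_, fun h i j k hij hjk => ?_⟩
  · have h : IsTriangleMax ω := h
    obtain ⟨a, ha⟩ := Finite.exists_max fun a => ω s(v a, v (a + 1))
    rcases (hv.ne (by simp) : v a ≠ v (a + 1)).lt_or_gt with hfwd | hbwd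
    · obtain ⟨b, hb, hge⟩ := h.exists_backward_ge v hfwd
      exact ⟨⟨a, hfwd, ha⟩, ⟨b, hb, fun c => (ha c).trans hge⟩⟩
    · obtain ⟨b, hb, hge⟩ := h.exists_forward_ge v hbwd
      exact ⟨⟨b, hb, fun c => (ha c).trans hge⟩, ⟨a, hbwd, ha⟩⟩
  · have hinj : Function.Injective ![i, j, k] :=
      (Fin.strictMono_iff_lt_succ.2 fun a => by fin_cases a <;> assumption).injective
    exact eq_max_of_triangle hij hjk (h 0 _ hinj).1 (h 0 _ hinj).2

/-- Orient the complete graph on `Fin n` (with `n ≥ 1`) from smaller to larger endpoint,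
and let `ω` assign a real weight to each edge (2-element subset).  Then the following are
equivalent:
(i) for all `i < j < k`, `ω {i,k} = max (ω {i,j}) (ω {j,k})`;
(ii) in every cycle `v 0, v 1, …, v (m-1)` (`m ≥ 3`, vertices distinct), the maximum of
`ω` over the edges of the cycle is attained both at some forward edge and at some
backward edge. -/
theorem stmt6 (n : ℕ) (hn : 1 ≤ n) (ω : Sym2 (Fin n) → ℝ) :
    (∀ i j k : Fin n, i < j → j < k → ω s(i, k) = max (ω s(i, j)) (ω s(j, k))) ↔
      (∀ (m : ℕ) (v : Fin (m + 3) → Fin n), Function.Injective v →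
        ((∃ a : Fin (m + 3), v a < v (a + 1) ∧
            ∀ b : Fin (m + 3), ω s(v b, v (b + 1)) ≤ ω s(v a, v (a + 1))) ∧
         (∃ a : Fin (m + 3), v (a + 1) < v a ∧
            ∀ b : Fin (m + 3), ω s(v b, v (b + 1)) ≤ ω s(v a, v (a + 1))))) :=
  stmt6_general n ω
end

section
/- Let P be a finite partially ordered set with n elements such that for every x ∈ P the set {y ∈ P : y ≤ x} is a chain. Then the number of bijections f : P → {1, …, n} satisfying f(x) < f(y) whenever x < y, multiplied by ∏_{x ∈ P} |{y ∈ P : x ≤ y}|, equals n!. -/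
/-!
In a forest poset every element lies above exactly one minimal element, so the up-sets of the
minimal elements partition `P`. A linear extension onto `Fin (m + 1)` is the choice of a minimal
element `x` (the preimage of `0`) followed by a linear extension of `P \ {x}`, and deleting a
minimal element changes no other up-set. By induction the left-hand side is therefore
`∑_{x minimal} #{y | x ≤ y} * m! = (m + 1) * m!`.
-/

/-- Natural labelings of `P`, i.e. its linear extensions onto `Fin n`. -/
abbrev NaturalLabeling (P : Type*) [Preorder P] (n : ℕ) := {f : P ≃ Fin n // StrictMono f}

section ForestPoset

variable {P : Type*} [PartialOrder P]

theorem isChain_Iic_subtype {p : P → Prop}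
    (hchain : ∀ x : P, IsChain (· ≤ ·) {y : P | y ≤ x}) (x : Subtype p) :
    IsChain (· ≤ ·) {y : Subtype p | y ≤ x} :=
  (hchain x.1).preimage _ _ Subtype.val Subtype.val_injective fun _ _ h => h

theorem existsUnique_isMin_le [Finite P] (hchain : ∀ x : P, IsChain (· ≤ ·) {y : P | y ≤ x})
    (y : P) : ∃! x : {x : P // IsMin x}, x.1 ≤ y := by
  obtain ⟨x, hxy, hx⟩ := exists_minimal_le_of_wellFoundedLT (fun _ => True) y trivial
  refine ⟨⟨x, minimal_true.1 hx⟩, hxy, fun ⟨z, hz⟩ hzy => Subtype.ext ?_⟩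
  rcases (hchain y).total hzy hxy with h | h
  · exact (minimal_true.1 hx).eq_of_le h
  · exact hz.eq_of_ge h

theorem sum_ncard_Ici_isMin [Fintype P] [DecidablePred (IsMin : P → Prop)]
    (hchain : ∀ x : P, IsChain (· ≤ ·) {y : P | y ≤ x}) :
    ∑ x : {x : P // IsMin x}, {y : P | x.1 ≤ y}.ncard = Fintype.card P := by
  choose root hroot using existsUnique_isMin_le hchain
  have hfiber (x : {x : P // IsMin x}) : {y // root y = x} ≃ {y | x.1 ≤ y} :=
    Equiv.subtypeEquivRight fun y =>
      ⟨fun h => h ▸ (hroot y).1, fun h => ((hroot y).2 x h).symm⟩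
  rw [← Nat.card_eq_fintype_card, ← Nat.card_congr (Equiv.sigmaFiberEquiv root), Nat.card_sigma]
  simp only [Nat.card_congr (hfiber _), Nat.card_coe_set_eq]

theorem ncard_Ici_subtype_ne {x : P} (hx : IsMin x) (z : {z : P // z ≠ x}) :
    {w : {z : P // z ≠ x} | z ≤ w}.ncard = {y : P | z.1 ≤ y}.ncard := by
  refine Set.ncard_preimage_of_injective_subset_range Subtype.val_injective fun y hzy => ?_
  refine ⟨⟨y, ?_⟩, rfl⟩
  rintro rfl
  exact z.2 (hx.eq_of_ge hzy).symm

end ForestPoset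

section FinSuccSubtype

variable {P : Type*} {m : ℕ} {x : P}

theorem apply_ne_zero_of_ne (f : {f : P ≃ Fin (m + 1) // f x = 0}) {z : P} (hz : z ≠ x) :
    f.1 z ≠ 0 :=
  fun h => hz (f.1.injective (h.trans f.2.symm))

variable [DecidableEq P]

def Equiv.finSuccSubtype (x : P) :
    {f : P ≃ Fin (m + 1) // f x = 0} ≃ ({z : P // z ≠ x} ≃ Fin m) where
  toFun f :=
    { toFun z := (f.1 z).pred (apply_ne_zero_of_ne f z.2)
      invFun i := ⟨f.1.symm i.succ, fun h =>
        i.succ_ne_zero (by rw [← f.1.apply_symm_apply i.succ, h, f.2])⟩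
      left_inv z := by simp
      right_inv i := by simp }
  invFun g := ⟨(Equiv.optionSubtypeNe x).symm.trans (g.optionCongr.trans (finSuccEquiv m).symm),
    by simp⟩
  left_inv f := by
    ext y
    by_cases hy : y = x
    · subst hy
      simp [f.2]
    · simp [Equiv.optionSubtypeNe_symm_of_ne hy]
  right_inv g := by
    ext z
    simp [z.2]

theorem Equiv.finSuccSubtype_apply_lt_apply_iff (f : {f : P ≃ Fin (m + 1) // f x = 0})
    (a b : {z : P // z ≠ x}) :
    Equiv.finSuccSubtype x f a < Equiv.finSuccSubtype x f b ↔ f.1 a < f.1 b :=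
  Fin.pred_lt_pred_iff (ha := apply_ne_zero_of_ne f a.2) (hb := apply_ne_zero_of_ne f b.2)

variable [PartialOrder P]

theorem Equiv.strictMono_finSuccSubtype_iff (hx : IsMin x)
    (f : {f : P ≃ Fin (m + 1) // f x = 0}) :
    StrictMono (Equiv.finSuccSubtype x f) ↔ StrictMono f.1 := by
  refine ⟨fun h a b hab => ?_, fun h a b hab => ?_⟩
  · have hbx : b ≠ x := fun hbx => hx.not_lt (hbx ▸ hab)
    by_cases hax : a = x
    · rw [hax, f.2]
      exact Fin.pos_iff_ne_zero.2 (apply_ne_zero_of_ne f hbx)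
    · exact (Equiv.finSuccSubtype_apply_lt_apply_iff _ ⟨a, hax⟩ ⟨b, hbx⟩).1 (h hab)
  · exact (Equiv.finSuccSubtype_apply_lt_apply_iff _ a b).2 (h hab)

def naturalLabelingEquivOfIsMin (hx : IsMin x) :
    {f : NaturalLabeling P (m + 1) // f.1 x = 0} ≃ NaturalLabeling {z : P // z ≠ x} m :=
  (Equiv.subtypeSubtypeEquivSubtypeInter _ _).trans <|
    (Equiv.subtypeEquivRight fun _ => and_comm).trans <|
      (Equiv.subtypeSubtypeEquivSubtypeInter _ _).symm.trans <|
        (Equiv.finSuccSubtype x).subtypeEquiv fun f =>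
          (Equiv.strictMono_finSuccSubtype_iff hx f).symm

end FinSuccSubtype

section Count

variable {P : Type*} [PartialOrder P]

theorem NaturalLabeling.isMin_symm_zero {m : ℕ} (f : NaturalLabeling P (m + 1)) :
    IsMin (f.1.symm 0) :=
  isMin_iff_forall_not_lt.2 fun z hz => by simpa using f.2 hz

theorem card_naturalLabeling_succ [Fintype P] [DecidableEq P] [DecidablePred (IsMin : P → Prop)]
    (m : ℕ) : Nat.card (NaturalLabeling P (m + 1)) =
      ∑ x : {x : P // IsMin x}, Nat.card (NaturalLabeling {z : P // z ≠ x.1} m) := by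
  let first (f : NaturalLabeling P (m + 1)) : {x : P // IsMin x} := ⟨_, f.isMin_symm_zero⟩
  have hfiber (x : {x : P // IsMin x}) :
      {f // first f = x} ≃ NaturalLabeling {z : P // z ≠ x.1} m :=
    (Equiv.subtypeEquivRight fun f => by rw [Subtype.ext_iff, Equiv.symm_apply_eq, eq_comm]).trans
      (naturalLabelingEquivOfIsMin x.2)
  rw [← Nat.card_congr (Equiv.sigmaFiberEquiv first), Nat.card_sigma]
  exact Finset.sum_congr rfl fun x _ => Nat.card_congr (hfiber x)

theorem card_naturalLabeling_mul_prod_ncard_Ici [Fintype P]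
    (hchain : ∀ x : P, IsChain (· ≤ ·) {y : P | y ≤ x}) :
    Nat.card (NaturalLabeling P (Fintype.card P)) * ∏ x : P, {y : P | x ≤ y}.ncard =
      (Fintype.card P).factorial := by
  induction hn : Fintype.card P generalizing P with
  | zero =>
    have : IsEmpty P := Fintype.card_eq_zero_iff.1 hn
    rw [Finset.univ_eq_empty, Finset.prod_empty, mul_one, Nat.factorial_zero,
      Nat.card_eq_one_iff_unique]
    exact ⟨inferInstance, ⟨⟨Equiv.equivOfIsEmpty _ _, isEmptyElim⟩⟩⟩
  | succ m ih =>
    classical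
    have hterm (x : {x : P // IsMin x}) :
        Nat.card (NaturalLabeling {z : P // z ≠ x.1} m) * ∏ y : P, {w : P | y ≤ w}.ncard =
          {y : P | x.1 ≤ y}.ncard * m.factorial := by
      have hcard : Fintype.card {z : P // z ≠ x.1} = m := by
        simp [Fintype.card_subtype_compl, hn]
      rw [Fintype.prod_eq_mul_prod_subtype_ne _ x.1, ← ih (isChain_Iic_subtype hchain) hcard]
      simp only [ncard_Ici_subtype_ne x.2]
      ring
    rw [card_naturalLabeling_succ, Finset.sum_mul, Finset.sum_congr rfl fun x _ => hterm x,
      ← Finset.sum_mul, sum_ncard_Ici_isMin hchain, hn, Nat.factorial_succ]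

end Count

/-- Let `P` be a finite poset with `n` elements in which every principal down-set
`{y : y ≤ x}` is a chain (a forest poset).  Then the number of linear extensions of `P`
(bijections `f : P ≃ Fin n` with `f x < f y` whenever `x < y`), multiplied by the product
over all `x ∈ P` of the size of the principal up-set `{y : x ≤ y}`, equals `n!`. -/
theorem stmt8 {P : Type*} [Fintype P] [PartialOrder P]
    (hchain : ∀ x : P, IsChain (· ≤ ·) {y : P | y ≤ x}) :
    Nat.card {f : P ≃ Fin (Fintype.card P) // ∀ x y : P, x < y → f x < f y} *
        ∏ x : P, ({y : P | x ≤ y}.ncard) =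
      Nat.factorial (Fintype.card P) :=
  card_naturalLabeling_mul_prod_ncard_Ici hchain
end
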